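/- arXiv:2403.10175 — 10 statements merged into one kernel-verified Lean document; each statement's English description precedes it below -/
import Mathlib

section
/- Assume covariate shift: p_tr(x,y) = p_tr(x)p(y|x), p_te(x,y) = p_te(x)p(y|x), and p_tr(x) > 0 wherever p_te(x) > 0. Let ℓ be a bounded measurable loss, let A_{n-1} be a measurable learning map from samples of size n−1 to hypotheses, and let S_n = {(x_i, y_i)}_{i=1}^n be i.i.d. from p_tr with S_n^j the sample with the j-th example removed. Then for every j, E_{S_n}[(p_te(x_j)/p_tr(x_j)) · ℓ(A_{n-1}(S_n^j)(x_j), y_j)] = E_{S' ∼ p_tr^{n-1}, (x,y) ∼ p_te}[ℓ(A_{n-1}(S')(x), y)] = R^{(n-1)}, the expected test-distribution risk of a hypothesis trained on n−1 training examples. -/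
open MeasureTheory ProbabilityTheory
open scoped MeasureTheory ENNReal NNReal

/-- withDensity on the first factor commutes with compProd. -/
lemma iwcv_compProd_withDensity {X Y : Type*} [MeasurableSpace X] [MeasurableSpace Y]
    (ρ : Measure X) [SFinite ρ] (κ : Kernel X Y) [IsSFiniteKernel κ]
    (f : X → ℝ≥0∞) (hf : Measurable f) :
    (ρ.withDensity f) ⊗ₘ κ = (ρ ⊗ₘ κ).withDensity (fun z => f z.1) := by
  ext s hs
  rw [Measure.compProd_apply hs, withDensity_apply _ hs,
    lintegral_withDensity_eq_lintegral_mul _ hf (Kernel.measurable_kernel_prodMk_left hs),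
    ← lintegral_indicator hs,
    Measure.lintegral_compProd (show Measurable (s.indicator fun z : X × Y => f z.1) from (hf.comp measurable_fst).indicator hs)]
  refine lintegral_congr fun x => ?_
  have : ∀ y, s.indicator (fun z : X × Y => f z.1) (x, y)
      = (Prod.mk x ⁻¹' s).indicator (fun _ => f x) y := by
    intro y
    simp only [Set.indicator, Set.mem_preimage]
    rfl
  simp_rw [this]
  rw [lintegral_indicator (measurable_prodMk_left hs), setLIntegral_const]
  simp [Pi.mul_apply, mul_comm]

/-- Single-fold step of Importance Weighted Cross Validation under covariate shift: with training
joint distribution `p_tr(x,y) = p_tr(x) p(y|x)` and test joint distribution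
`p_te(x,y) = p_te(x) p(y|x)` sharing the conditional `p(y|x)` (the Markov kernel `κ`), with
`p_tr(x) > 0` wherever `p_te(x) > 0`, for an i.i.d. training sample `S` of size `n + 1` from the
training joint distribution and every fold `j`,
`E_S[(p_te(x_j)/p_tr(x_j)) ℓ(A(S^j)(x_j), y_j)]
  = E_{S' ∼ p_tr^n, (x,y) ∼ p_te}[ℓ(A(S')(x), y)] = R^{(n)}`. -/
theorem iwcv_single_fold_unbiased
    {X Y : Type*} [MeasurableSpace X] [MeasurableSpace Y]
    (μ : Measure X) [SigmaFinite μ]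
    (ptr pte : X → ℝ) (κ : Kernel X Y) [IsMarkovKernel κ]
    (hm1 : Measurable ptr) (hm2 : Measurable pte)
    (h0tr : ∀ x, 0 ≤ ptr x) (h0te : ∀ x, 0 ≤ pte x)
    (htr1 : ∫ x, ptr x ∂μ = 1) (hte1 : ∫ x, pte x ∂μ = 1)
    (hpos : ∀ᵐ x ∂μ, 0 < pte x → 0 < ptr x)
    (n : ℕ)
    (A : (Fin n → X × Y) → X → ℝ)
    (hA : Measurable fun s : (Fin n → X × Y) × X => A s.1 s.2)
    (ℓ : ℝ × Y → ℝ) (hℓ : Measurable ℓ) (C : ℝ) (hC : ∀ z, |ℓ z| ≤ C)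
    (j : Fin (n + 1)) :
    ∫ S : Fin (n + 1) → X × Y,
        (pte (S j).1 / ptr (S j).1) * ℓ (A (j.removeNth S) (S j).1, (S j).2)
        ∂(Measure.pi fun _ => (μ.withDensity fun x => ENNReal.ofReal (ptr x)) ⊗ₘ κ)
      = ∫ S' : Fin n → X × Y,
          ∫ z : X × Y, ℓ (A S' z.1, z.2)
            ∂((μ.withDensity fun x => ENNReal.ofReal (pte x)) ⊗ₘ κ)
          ∂(Measure.pi fun _ => (μ.withDensity fun x => ENNReal.ofReal (ptr x)) ⊗ₘ κ) := by
  classical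
  set w : X → ℝ := fun x => pte x / ptr x with hw
  have hwm : Measurable w := hm2.div hm1
  have hw0 : ∀ x, 0 ≤ w x := fun x => div_nonneg (h0te x) (h0tr x)
  have hiptr : Integrable ptr μ := by
    by_contra h; rw [integral_undef h] at htr1; exact one_ne_zero htr1.symm
  have hipte : Integrable pte μ := by
    by_contra h; rw [integral_undef h] at hte1; exact one_ne_zero hte1.symm
  set ρtr : Measure X := μ.withDensity fun x => ENNReal.ofReal (ptr x) with hρtr
  set ρte : Measure X := μ.withDensity fun x => ENNReal.ofReal (pte x) with hρte
  haveI : IsProbabilityMeasure ρtr := ⟨by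
    rw [hρtr, withDensity_apply _ MeasurableSet.univ, setLIntegral_univ,
      ← ofReal_integral_eq_lintegral_ofReal hiptr (ae_of_all _ h0tr), htr1,
      ENNReal.ofReal_one]⟩
  haveI : IsProbabilityMeasure ρte := ⟨by
    rw [hρte, withDensity_apply _ MeasurableSet.univ, setLIntegral_univ,
      ← ofReal_integral_eq_lintegral_ofReal hipte (ae_of_all _ h0te), hte1,
      ENNReal.ofReal_one]⟩
  -- density identity: ρtr.withDensity (ofReal ∘ w) = ρte
  have hdens : ρtr.withDensity (fun x => ENNReal.ofReal (w x)) = ρte := by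
    rw [hρtr, hρte, ← withDensity_mul μ hm1.ennreal_ofReal hwm.ennreal_ofReal]
    refine withDensity_congr_ae ?_
    filter_upwards [hpos] with x hx
    rcases lt_or_eq_of_le (h0tr x) with h | h
    · rw [Pi.mul_apply, ← ENNReal.ofReal_mul (h0tr x), hw, mul_div_cancel₀ _ h.ne']
    · have hte0 : pte x = 0 := by
        by_contra hne
        exact absurd (hx (lt_of_le_of_ne (h0te x) (Ne.symm hne))) (by rw [← h]; exact lt_irrefl 0)
      simp [Pi.mul_apply, hw, ← h, hte0]
  set ν : Measure (X × Y) := ρtr ⊗ₘ κ with hν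
  set νte : Measure (X × Y) := ρte ⊗ₘ κ with hνte
  set π : Measure (Fin n → X × Y) := Measure.pi fun _ => ν with hπ
  have hκeq : ν.withDensity (fun z => ENNReal.ofReal (w z.1)) = νte := by
    rw [hν, hνte, ← iwcv_compProd_withDensity ρtr κ _ hwm.ennreal_ofReal, hdens]
  have hprodeq :
      (ν.prod π).withDensity (fun p => ENNReal.ofReal (w p.1.1)) = νte.prod π := by
    rw [← Measure.compProd_const (μ := ν) (ν := π),
      ← Measure.compProd_const (μ := νte) (ν := π),
      ← iwcv_compProd_withDensity ν (Kernel.const _ π) (fun z : X × Y => ENNReal.ofReal (w z.1)) ((hwm.comp measurable_fst).ennreal_ofReal), hκeq]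
  -- the unweighted integrand
  set G : (X × Y) × (Fin n → X × Y) → ℝ := fun p => ℓ (A p.2 p.1.1, p.1.2) with hG
  have hGm : Measurable G :=
    hℓ.comp ((hA.comp (measurable_snd.prodMk measurable_fst.fst)).prodMk
      measurable_fst.snd)
  -- Step 1: pi integral to product integral
  have hmp := measurePreserving_piFinSuccAbove (fun _ : Fin (n + 1) => ν) j
  have step1 :
      ∫ S : Fin (n + 1) → X × Y,
          (pte (S j).1 / ptr (S j).1) * ℓ (A (j.removeNth S) (S j).1, (S j).2)
          ∂(Measure.pi fun _ => ν)
        = ∫ p, w p.1.1 * G p ∂(ν.prod π) := by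
    rw [← hmp.integral_comp (MeasurableEquiv.measurableEmbedding _)
      (fun p => w p.1.1 * G p)]
    rfl
  -- Step 2: change of measure via withDensity
  have step2 : ∫ p, w p.1.1 * G p ∂(ν.prod π) = ∫ p, G p ∂(νte.prod π) := by
    rw [← hprodeq]
    have hf : Measurable fun p : (X × Y) × (Fin n → X × Y) => (w p.1.1).toNNReal :=
      (hwm.comp measurable_fst.fst).real_toNNReal
    have := integral_withDensity_eq_integral_smul (μ := ν.prod π) hf G
    simp only [ENNReal.ofReal] at this ⊢
    rw [this]
    refine integral_congr_ae (ae_of_all _ fun p => ?_)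
    simp only [NNReal.smul_def, Real.coe_toNNReal _ (hw0 _), smul_eq_mul]
  -- Step 3: Fubini on the test-side product
  have hGint : Integrable G (νte.prod π) := by
    refine Integrable.mono' (integrable_const C) hGm.aestronglyMeasurable
      (ae_of_all _ fun p => ?_)
    rw [Real.norm_eq_abs]; exact hC _
  have step3 : ∫ p, G p ∂(νte.prod π)
      = ∫ S' : Fin n → X × Y, ∫ z : X × Y, ℓ (A S' z.1, z.2) ∂νte ∂π :=
    MeasureTheory.integral_prod_symm G hGint
  rw [step1, step2, step3]
end

section
/- Assume covariate shift: p_tr(x,y) = p_tr(x)p(y|x), p_te(x,y) = p_te(x)p(y|x), and p_tr(x) > 0 wherever p_te(x) > 0. Let ℓ be a bounded measurable loss, let A_{n-1} be a measurable learning map from samples of size n−1 to hypotheses, and let S_n be i.i.d. from p_tr. Then the Leave-One-Out Importance-Weighted Cross Validation estimate R̂_LOOIWCV = (1/n) Σ_{j=1}^n (p_te(x_j)/p_tr(x_j)) · ℓ(A_{n-1}(S_n^j)(x_j), y_j) satisfies E_{S_n}[R̂_LOOIWCV] = R^{(n-1)}, the expected test-distribution risk of a hypothesis trained on n−1 training examples;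 i.e., LOOIWCV gives an unbiased estimate of R^{(n-1)} even under covariate shift. -/
open MeasureTheory ProbabilityTheory
open scoped MeasureTheory ENNReal

/-! For each `j`, the map `S ↦ (S j, S^j)` carries `p_tr^{n+1}` to `p_tr ⊗ p_tr^n`, so every
summand of the estimate has the same expectation: that of the importance-weighted loss
`(p_te(x)/p_tr(x)) ℓ(A(S')(x), y)` under `p_tr ⊗ p_tr^n`. As the weight depends on `x` alone and
the conditional `p(y|x)` is shared, reweighting `p_tr(x) p(y|x)` by it yields `p_te(x) p(y|x)`,
which turns this expectation into the test risk of `A` trained on `n` examples. -/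

section

variable {X Y : Type*} [MeasurableSpace X] [MeasurableSpace Y]

lemma isProbabilityMeasure_withDensity_ofReal {μ : Measure X} {p : X → ℝ}
    (h0 : 0 ≤ᵐ[μ] p) (h1 : ∫ x, p x ∂μ = 1) :
    IsProbabilityMeasure (μ.withDensity fun x => ENNReal.ofReal (p x)) := by
  have hint : Integrable p μ := by
    by_contra h
    rw [integral_undef h] at h1
    exact zero_ne_one h1
  constructor
  rw [withDensity_apply _ MeasurableSet.univ, Measure.restrict_univ,
    ← ofReal_integral_eq_lintegral_ofReal hint h0, h1, ENNReal.ofReal_one]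

lemma withDensity_compProd_left (μ : Measure X) [SFinite μ] (κ : Kernel X Y)
    [IsSFiniteKernel κ] {f : X → ℝ≥0∞} (hf : Measurable f) :
    μ.withDensity f ⊗ₘ κ = (μ ⊗ₘ κ).withDensity fun z => f z.1 := by
  refine Measure.ext_of_lintegral _ fun φ hφ => ?_
  rw [Measure.lintegral_compProd hφ, lintegral_withDensity_eq_lintegral_mul _ hf (by fun_prop),
    lintegral_withDensity_eq_lintegral_mul _ (by fun_prop) hφ,
    Measure.lintegral_compProd (by fun_prop)]
  refine lintegral_congr fun x => ?_
  rw [Pi.mul_apply, ← lintegral_const_mul _ (by fun_prop)]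
  rfl

lemma withDensity_ofReal_div_withDensity_ofReal {μ : Measure X} {p q : X → ℝ}
    (hp : Measurable p) (hq : Measurable q) (hq0 : ∀ x, 0 ≤ q x)
    (hpos : ∀ᵐ x ∂μ, 0 < q x → 0 < p x) :
    (μ.withDensity fun x => ENNReal.ofReal (p x)).withDensity
        (fun x => ENNReal.ofReal (q x / p x))
      = μ.withDensity fun x => ENNReal.ofReal (q x) := by
  rw [← withDensity_mul μ (by fun_prop) (by fun_prop)]
  refine withDensity_congr_ae ?_
  filter_upwards [hpos] with x hx
  rcases (hq0 x).eq_or_lt with hzero | hqx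
  -- where `q x = 0` both densities vanish, also if `p x = 0` makes `q x / p x` a junk `0`
  · simp [← hzero]
  · have hpx := hx hqx
    rw [Pi.mul_apply, ← ENNReal.ofReal_mul hpx.le, mul_div_cancel₀ _ hpx.ne']

lemma withDensity_ofReal_div_compProd {μ : Measure X} [SFinite μ] {p q : X → ℝ}
    (hp : Measurable p) (hq : Measurable q) (hq0 : ∀ x, 0 ≤ q x)
    (hpos : ∀ᵐ x ∂μ, 0 < q x → 0 < p x) (κ : Kernel X Y) [IsSFiniteKernel κ] :
    ((μ.withDensity fun x => ENNReal.ofReal (p x)) ⊗ₘ κ).withDensity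
        (fun z => ENNReal.ofReal (q z.1 / p z.1))
      = (μ.withDensity fun x => ENNReal.ofReal (q x)) ⊗ₘ κ := by
  rw [← withDensity_compProd_left _ κ (f := fun x => ENNReal.ofReal (q x / p x)) (by fun_prop),
    withDensity_ofReal_div_withDensity_ofReal hp hq hq0 hpos]

end

section

variable {Z : Type*} [MeasurableSpace Z]

lemma integral_mul_eq_integral_withDensity_ofReal {ν : Measure Z} {w : Z → ℝ}
    (hw : Measurable w) (hw0 : ∀ z, 0 ≤ w z) (g : Z → ℝ) :
    ∫ z, w z * g z ∂ν = ∫ z, g z ∂(ν.withDensity fun z => ENNReal.ofReal (w z)) := by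
  rw [integral_withDensity_eq_integral_toReal_smul (by fun_prop)
    (ae_of_all _ fun _ => ENNReal.ofReal_lt_top)]
  simp only [ENNReal.toReal_ofReal (hw0 _), smul_eq_mul]

lemma integrable_mul_iff_integrable_withDensity_ofReal {ν : Measure Z} {w : Z → ℝ}
    (hw : Measurable w) (hw0 : ∀ z, 0 ≤ w z) {g : Z → ℝ} :
    Integrable (fun z => w z * g z) ν
      ↔ Integrable g (ν.withDensity fun z => ENNReal.ofReal (w z)) := by
  rw [integrable_withDensity_iff_integrable_smul' (by fun_prop)
    (ae_of_all _ fun _ => ENNReal.ofReal_lt_top)]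
  simp only [ENNReal.toReal_ofReal (hw0 _), smul_eq_mul]

variable (ν : Measure Z) [SigmaFinite ν] {n : ℕ}

lemma integral_comp_removeNth (F : Z × (Fin n → Z) → ℝ) (j : Fin (n + 1)) :
    ∫ S : Fin (n + 1) → Z, F (S j, j.removeNth S) ∂(Measure.pi fun _ => ν)
      = ∫ p, F p ∂(ν.prod (Measure.pi fun _ => ν)) :=
  (measurePreserving_piFinSuccAbove (fun _ => ν) j).integral_comp
    (MeasurableEquiv.measurableEmbedding _) F

lemma integrable_comp_removeNth {F : Z × (Fin n → Z) → ℝ}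
    (hF : Integrable F (ν.prod (Measure.pi fun _ => ν))) (j : Fin (n + 1)) :
    Integrable (fun S : Fin (n + 1) → Z => F (S j, j.removeNth S)) (Measure.pi fun _ => ν) :=
  (measurePreserving_piFinSuccAbove (fun _ => ν) j).integrable_comp_emb
    (MeasurableEquiv.measurableEmbedding _) |>.2 hF

lemma integral_leaveOneOut_average {F : Z × (Fin n → Z) → ℝ}
    (hF : Integrable F (ν.prod (Measure.pi fun _ => ν))) :
    ∫ S : Fin (n + 1) → Z, 1 / ((n : ℝ) + 1) * ∑ j : Fin (n + 1), F (S j, j.removeNth S)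
        ∂(Measure.pi fun _ => ν)
      = ∫ p, F p ∂(ν.prod (Measure.pi fun _ => ν)) := by
  rw [integral_const_mul, integral_finsetSum _ fun j _ => integrable_comp_removeNth ν hF j]
  simp only [integral_comp_removeNth, Finset.sum_const, Finset.card_univ, Fintype.card_fin,
    nsmul_eq_mul]
  field_simp
  push_cast
  ring

end

/-- Unbiasedness of Leave-One-Out Importance-Weighted Cross Validation under covariate shift:
with training joint distribution `p_tr(x,y) = p_tr(x) p(y|x)` and test joint distribution
`p_te(x,y) = p_te(x) p(y|x)` sharing the conditional `p(y|x)` (the Markov kernel `κ`), with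
`p_tr(x) > 0` wherever `p_te(x) > 0`, for an i.i.d. training sample `S` of size `n + 1` from the
training joint distribution, the LOOIWCV estimate
`(1/(n+1)) ∑_j (p_te(x_j)/p_tr(x_j)) ℓ(A(S^j)(x_j), y_j)` has expectation
`R^{(n)} = E_{S' ∼ p_tr^n, (x,y) ∼ p_te}[ℓ(A(S')(x), y)]`, the expected test-distribution risk of
a hypothesis trained on one fewer training example. -/
theorem looiwcv_unbiased
    {X Y : Type*} [MeasurableSpace X] [MeasurableSpace Y]
    (μ : Measure X) [SigmaFinite μ]
    (ptr pte : X → ℝ) (κ : Kernel X Y) [IsMarkovKernel κ]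
    (hm1 : Measurable ptr) (hm2 : Measurable pte)
    (h0tr : ∀ x, 0 ≤ ptr x) (h0te : ∀ x, 0 ≤ pte x)
    (htr1 : ∫ x, ptr x ∂μ = 1) (hte1 : ∫ x, pte x ∂μ = 1)
    (hpos : ∀ᵐ x ∂μ, 0 < pte x → 0 < ptr x)
    (n : ℕ)
    (A : (Fin n → X × Y) → X → ℝ)
    (hA : Measurable fun s : (Fin n → X × Y) × X => A s.1 s.2)
    (ℓ : ℝ × Y → ℝ) (hℓ : Measurable ℓ) (C : ℝ) (hC : ∀ z, |ℓ z| ≤ C) :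
    ∫ S : Fin (n + 1) → X × Y,
        (1 / ((n : ℝ) + 1)) * ∑ j : Fin (n + 1),
          (pte (S j).1 / ptr (S j).1) * ℓ (A (j.removeNth S) (S j).1, (S j).2)
        ∂(Measure.pi fun _ => (μ.withDensity fun x => ENNReal.ofReal (ptr x)) ⊗ₘ κ)
      = ∫ S' : Fin n → X × Y,
          ∫ z : X × Y, ℓ (A S' z.1, z.2)
            ∂((μ.withDensity fun x => ENNReal.ofReal (pte x)) ⊗ₘ κ)
          ∂(Measure.pi fun _ => (μ.withDensity fun x => ENNReal.ofReal (ptr x)) ⊗ₘ κ) := by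
  have := isProbabilityMeasure_withDensity_ofReal (μ := μ) (ae_of_all _ h0tr) htr1
  have := isProbabilityMeasure_withDensity_ofReal (μ := μ) (ae_of_all _ h0te) hte1
  set νtr := (μ.withDensity fun x => ENNReal.ofReal (ptr x)) ⊗ₘ κ
  set νte := (μ.withDensity fun x => ENNReal.ofReal (pte x)) ⊗ₘ κ
  set π := Measure.pi fun _ : Fin n => νtr
  set w : (X × Y) × (Fin n → X × Y) → ℝ := fun p => pte p.1.1 / ptr p.1.1
  set G : (X × Y) × (Fin n → X × Y) → ℝ := fun p => ℓ (A p.2 p.1.1, p.1.2)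
  have hw : Measurable w := by fun_prop
  have hw0 : ∀ p, 0 ≤ w p := fun p => div_nonneg (h0te _) (h0tr _)
  have hreweight : (νtr.prod π).withDensity (fun p => ENNReal.ofReal (w p)) = νte.prod π := by
    rw [← prod_withDensity_left (f := fun z : X × Y => ENNReal.ofReal (pte z.1 / ptr z.1))
      (by fun_prop), withDensity_ofReal_div_compProd hm1 hm2 h0te hpos κ]
  have hGm : Measurable G := hℓ.comp
    ((hA.comp (measurable_snd.prodMk (measurable_fst.comp measurable_fst))).prodMk
      (measurable_snd.comp measurable_fst))
  have hG : Integrable G (νte.prod π) :=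
    .of_bound hGm.aestronglyMeasurable C (ae_of_all _ fun p => (Real.norm_eq_abs _).trans_le (hC _))
  calc _ = ∫ p, w p * G p ∂(νtr.prod π) := integral_leaveOneOut_average νtr
        ((integrable_mul_iff_integrable_withDensity_ofReal hw hw0).2 (hreweight ▸ hG))
    _ = ∫ p, G p ∂(νte.prod π) := by
      rw [integral_mul_eq_integral_withDensity_ofReal hw hw0, hreweight]
    _ = _ := integral_prod_symm G hG
end

section
/- (Zadrozny's sample selection bias correction.) Let (x, y, s) be random variables on a countable (or finite) space, where s ∈ {0,1} indicates selection, with joint probability P. Assume P(s = 1 | x, y) = P(s = 1 | x) for all (x, y), that P(s = 1 | x) > 0 for all x with P(x) > 0, and that P(s = 1) > 0. Define the importance weight w(x) = P(s = 1)/P(s = 1 | x). Then for any hypothesis h and loss ℓ, E[w(x) ℓ(h(x), y) | s = 1] = E[ℓ(h(x), y)]; i.e., importance weighting by w corrects the sample selection bias. -/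
open MeasureTheory ProbabilityTheory
open scoped ProbabilityTheory ENNReal

/-!
Push `P` and the selected distribution `P[|s = 1]` forward to `(x, y)`. Selection depending only
on `x` is Bayes' rule `P(x, y) = P(x) / P(x, s = 1) · P(x, y, s = 1)`, which says exactly that the
first pushforward has density `w(x)` with respect to the second; on a countable space this is
checked on singletons. Integrating `ℓ (h x, y)` against both sides of this identity of measures
gives the theorem.
-/

lemma MeasureTheory.Measure.eq_withDensity_of_forall_singleton {α : Type*} [MeasurableSpace α]
    [MeasurableSingletonClass α] [Countable α] {μ ν : Measure α} {ρ : α → ℝ≥0∞}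
    (h : ∀ a, μ {a} = ρ a * ν {a}) : μ = ν.withDensity ρ :=
  Measure.ext_of_singleton fun a => by
    rw [withDensity_apply _ (measurableSet_singleton a), lintegral_singleton, h]

namespace SampleSelection

variable {X Y : Type*} [MeasurableSpace X] [MeasurableSpace Y]

noncomputable def importanceWeight (P : Measure (X × Y × Bool)) (a : X) : ℝ≥0∞ :=
  P {z | z.2.2 = true} * P {z | z.1 = a} / P {z | z.1 = a ∧ z.2.2 = true}

variable {P : Measure (X × Y × Bool)}

lemma importanceWeight_lt_top [IsFiniteMeasure P]
    (hpos : ∀ a : X, 0 < P {z | z.1 = a} → 0 < P {z | z.1 = a ∧ z.2.2 = true}) (a : X) :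
    importanceWeight P a < ∞ := by
  rcases eq_or_ne (P {z | z.1 = a}) 0 with ha | ha
  · simp [importanceWeight, ha]
  · exact ENNReal.div_lt_top (by finiteness) (hpos a (pos_iff_ne_zero.2 ha)).ne'

lemma measure_eq_div_mul_of_selection [IsFiniteMeasure P] {a : X} {b : Y}
    (hsel : P {z | z.1 = a ∧ z.2.1 = b ∧ z.2.2 = true} * P {z | z.1 = a}
      = P {z | z.1 = a ∧ z.2.2 = true} * P {z | z.1 = a ∧ z.2.1 = b})
    (hpos : 0 < P {z | z.1 = a} → 0 < P {z | z.1 = a ∧ z.2.2 = true}) :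
    P {z | z.1 = a ∧ z.2.1 = b}
      = P {z | z.1 = a} / P {z | z.1 = a ∧ z.2.2 = true}
        * P {z | z.1 = a ∧ z.2.1 = b ∧ z.2.2 = true} := by
  rcases eq_or_ne (P {z | z.1 = a}) 0 with ha | ha
  · rw [ha, ENNReal.zero_div, zero_mul]
    exact measure_mono_null (fun z hz => hz.1) ha
  have has := (hpos (pos_iff_ne_zero.2 ha)).ne'
  calc P {z | z.1 = a ∧ z.2.1 = b}
      = (P {z | z.1 = a ∧ z.2.2 = true})⁻¹
          * (P {z | z.1 = a ∧ z.2.2 = true} * P {z | z.1 = a ∧ z.2.1 = b}) := by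
        rw [← mul_assoc, ENNReal.inv_mul_cancel has (measure_ne_top _ _), one_mul]
    _ = _ := by rw [← hsel, div_eq_mul_inv]; ring

variable [MeasurableSingletonClass X] [Countable X] [MeasurableSingletonClass Y] [Countable Y]

lemma map_apply_singleton (p : X × Y) :
    P.map (fun z => (z.1, z.2.1)) {p} = P {z | z.1 = p.1 ∧ z.2.1 = p.2} := by
  rw [Measure.map_apply (measurable_of_countable _) (measurableSet_singleton p)]
  congr 1
  ext z
  simp [Prod.ext_iff]

lemma map_cond_apply_singleton (p : X × Y) :
    (P[|{z | z.2.2 = true}]).map (fun z => (z.1, z.2.1)) {p}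
      = (P {z | z.2.2 = true})⁻¹ * P {z | z.1 = p.1 ∧ z.2.1 = p.2 ∧ z.2.2 = true} := by
  rw [Measure.map_apply (measurable_of_countable _) (measurableSet_singleton p),
    cond_apply (Set.to_countable _).measurableSet]
  congr 2
  ext z
  simp [Prod.ext_iff, and_comm, and_assoc]

lemma map_eq_withDensity_map_cond [IsFiniteMeasure P]
    (hsel : ∀ (a : X) (b : Y),
      P {z | z.1 = a ∧ z.2.1 = b ∧ z.2.2 = true} * P {z | z.1 = a}
        = P {z | z.1 = a ∧ z.2.2 = true} * P {z | z.1 = a ∧ z.2.1 = b})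
    (hpos : ∀ a : X, 0 < P {z | z.1 = a} → 0 < P {z | z.1 = a ∧ z.2.2 = true})
    (hs : P {z | z.2.2 = true} ≠ 0) :
    P.map (fun z => (z.1, z.2.1))
      = ((P[|{z | z.2.2 = true}]).map (fun z => (z.1, z.2.1))).withDensity
          fun p => importanceWeight P p.1 := by
  refine Measure.eq_withDensity_of_forall_singleton fun p => ?_
  rw [map_apply_singleton, map_cond_apply_singleton,
    measure_eq_div_mul_of_selection (hsel p.1 p.2) (hpos p.1), importanceWeight, mul_div_assoc,
    mul_mul_mul_comm, ENNReal.mul_inv_cancel hs (measure_ne_top _ _), one_mul]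

end SampleSelection

open SampleSelection

theorem zadrozny_sample_selection_bias_correction_general
    {X Y : Type*} [MeasurableSpace X] [MeasurableSingletonClass X] [Countable X]
    [MeasurableSpace Y] [MeasurableSingletonClass Y] [Countable Y]
    (P : Measure (X × Y × Bool)) [IsProbabilityMeasure P]
    (hsel : ∀ (a : X) (b : Y),
      P {z | z.1 = a ∧ z.2.1 = b ∧ z.2.2 = true} * P {z | z.1 = a}
        = P {z | z.1 = a ∧ z.2.2 = true} * P {z | z.1 = a ∧ z.2.1 = b})
    (hpos : ∀ a : X, 0 < P {z | z.1 = a} → 0 < P {z | z.1 = a ∧ z.2.2 = true})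
    (hs : 0 < P {z | z.2.2 = true})
    (h : X → ℝ)
    (ℓ : ℝ × Y → ℝ) :
    ∫ z : X × Y × Bool,
        ((P {w | w.2.2 = true}).toReal * (P {w | w.1 = z.1}).toReal
            / (P {w | w.1 = z.1 ∧ w.2.2 = true}).toReal) * ℓ (h z.1, z.2.1)
        ∂(P[|{w | w.2.2 = true}])
      = ∫ z : X × Y × Bool, ℓ (h z.1, z.2.1) ∂P := by
  calc _ = ∫ p, (importanceWeight P p.1).toReal • ℓ (h p.1, p.2)
          ∂(P[|{w | w.2.2 = true}]).map fun z => (z.1, z.2.1) := by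
        rw [integral_map (measurable_of_countable _).aemeasurable
          (measurable_of_countable _).aestronglyMeasurable]
        simp [importanceWeight, ENNReal.toReal_div]
    _ = ∫ p, ℓ (h p.1, p.2) ∂((P[|{w | w.2.2 = true}]).map fun z => (z.1, z.2.1)).withDensity
          fun p => importanceWeight P p.1 := by
        rw [integral_withDensity_eq_integral_toReal_smul
          (f := fun p : X × Y => importanceWeight P p.1) (measurable_of_countable _)
          (ae_of_all _ fun p => importanceWeight_lt_top hpos p.1)]
    _ = ∫ p, ℓ (h p.1, p.2) ∂P.map fun z => (z.1, z.2.1) := by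
        rw [map_eq_withDensity_map_cond hsel hpos hs.ne']
    _ = _ := integral_map (measurable_of_countable _).aemeasurable
          (measurable_of_countable _).aestronglyMeasurable

/-- Zadrozny's sample selection bias correction: on a countable space, if selection depends only
on `x` (`P(s=1|x,y) = P(s=1|x)`, stated in cleared form), `P(s=1|x) > 0` wherever `P(x) > 0`, and
`P(s=1) > 0`, then with the importance weight `w(x) = P(s=1)/P(s=1|x) = P(s=1)·P(x)/P(x, s=1)`,
for any hypothesis `h` and bounded measurable loss `ℓ`,
`E[w(x) ℓ(h(x), y) | s = 1] = E[ℓ(h(x), y)]`. -/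
theorem zadrozny_sample_selection_bias_correction
    {X Y : Type*} [MeasurableSpace X] [MeasurableSingletonClass X] [Countable X]
    [MeasurableSpace Y] [MeasurableSingletonClass Y] [Countable Y]
    (P : Measure (X × Y × Bool)) [IsProbabilityMeasure P]
    (hsel : ∀ (a : X) (b : Y),
      P {z | z.1 = a ∧ z.2.1 = b ∧ z.2.2 = true} * P {z | z.1 = a}
        = P {z | z.1 = a ∧ z.2.2 = true} * P {z | z.1 = a ∧ z.2.1 = b})
    (hpos : ∀ a : X, 0 < P {z | z.1 = a} → 0 < P {z | z.1 = a ∧ z.2.2 = true})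
    (hs : 0 < P {z | z.2.2 = true})
    (h : X → ℝ) (hh : Measurable h)
    (ℓ : ℝ × Y → ℝ) (hℓ : Measurable ℓ) (C : ℝ) (hC : ∀ z, |ℓ z| ≤ C) :
    ∫ z : X × Y × Bool,
        ((P {w | w.2.2 = true}).toReal * (P {w | w.1 = z.1}).toReal
            / (P {w | w.1 = z.1 ∧ w.2.2 = true}).toReal) * ℓ (h z.1, z.2.1)
        ∂(P[|{w | w.2.2 = true}])
      = ∫ z : X × Y × Bool, ℓ (h z.1, z.2.1) ∂P :=
  zadrozny_sample_selection_bias_correction_general P hsel hpos hs h ℓ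
end

section
/- (Feedback shift importance weighting consistency.) Let X be a countable (or finite) input space, and let C and Y be {0,1}-valued random variables where C indicates true conversion and Y indicates conversion observed during the training term. Assume P(Y = y | X = x) > 0 for all x with P(X = x) > 0 and y ∈ {0,1}. Then for any hypothesis h and loss ℓ, E_{(x,y)}[ (P(C = y | X = x)/P(Y = y | X = x)) · ℓ(h(x), y) ] = E_{(x,c)}[ℓ(h(x), c)], where the left expectation is over the joint law of (X, Y) and the right over the joint law of (X, C); i.e., FSIW-weighted empirical risk is an unbiased estimate of the risk with respect to true conversions. -/
open MeasureTheory
open scoped ENNReal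

/-! Pushing `P` forward along `(X, Y)` and `(X, C)` gives the joint laws `μ` and `ν` on the
countable space `X × Bool`, and the FSIW weight at `p` is `ν {p} / μ {p}`, i.e. the density
`dν/dμ`, which exists because positivity of `P(Y = y | X = x)` forces `ν ≪ μ`. On a countable
space both integrals are sums over atoms, and weighting turns the atom `μ {p} • w p • ℓ p` of the
left side into the atom `ν {p} • ℓ p` of the right side, so integrability transfers as well. -/

namespace MeasureTheory

section Discrete

variable {α : Type*} [MeasurableSpace α] [Countable α]

theorem Measure.absolutelyContinuous_of_forall_singleton {μ ν : Measure α}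
    (h : ∀ a, μ {a} = 0 → ν {a} = 0) : ν ≪ μ := fun s hs => by
  rw [measure_null_iff_singleton s.to_countable] at hs ⊢
  exact fun a ha => h a (hs a ha)

variable [MeasurableSingletonClass α] {E : Type*} [NormedAddCommGroup E]

theorem integrable_iff_tsum_enorm_mul_lt_top {μ : Measure α} {f : α → E} :
    Integrable f μ ↔ ∑' a, ‖f a‖ₑ * μ {a} < ∞ := by
  rw [Integrable, hasFiniteIntegral_iff_enorm, lintegral_countable']
  exact and_iff_right StronglyMeasurable.of_discrete.aestronglyMeasurable

variable [NormedSpace ℝ E] [CompleteSpace E]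

theorem integral_eq_of_measureReal_singleton_smul_eq {μ ν : Measure α}
    [IsFiniteMeasure μ] [IsFiniteMeasure ν] {f g : α → E}
    (hfg : ∀ a, μ.real {a} • f a = ν.real {a} • g a) :
    ∫ a, f a ∂μ = ∫ a, g a ∂ν := by
  have enorm_eq : ∀ a, ‖f a‖ₑ * μ {a} = ‖g a‖ₑ * ν {a} := fun a => by
    simpa [enorm_smul, Real.enorm_of_nonneg, measureReal_def, mul_comm] using
      congrArg (‖·‖ₑ) (hfg a)
  have integrable_iff : Integrable f μ ↔ Integrable g ν := by
    simp only [integrable_iff_tsum_enorm_mul_lt_top, enorm_eq]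
  by_cases hf : Integrable f μ
  · rw [integral_countable hf, integral_countable (integrable_iff.mp hf)]
    exact tsum_congr hfg
  · rw [integral_undef hf, integral_undef (integrable_iff.not.mp hf)]

theorem integral_measureReal_div_smul_eq {μ ν : Measure α} [IsFiniteMeasure μ]
    [IsFiniteMeasure ν] (hνμ : ν ≪ μ) (g : α → E) :
    ∫ a, (ν.real {a} / μ.real {a}) • g a ∂μ = ∫ a, g a ∂ν := by
  refine integral_eq_of_measureReal_singleton_smul_eq fun a => ?_
  by_cases hμa : μ.real {a} = 0
  · have hνa : ν.real {a} = 0 := by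
      rw [measureReal_eq_zero_iff] at hμa ⊢
      exact hνμ hμa
    simp [hμa, hνa]
  · rw [smul_smul, mul_div_cancel₀ _ hμa]

end Discrete

theorem Measure.map_prodMk_apply_singleton {Ω β γ : Type*} [MeasurableSpace Ω]
    [MeasurableSpace β] [MeasurableSingletonClass β] [MeasurableSpace γ]
    [MeasurableSingletonClass γ] (P : Measure Ω) {f : Ω → β} {g : Ω → γ} (hf : Measurable f)
    (hg : Measurable g) (b : β) (c : γ) :
    P.map (fun ω => (f ω, g ω)) {(b, c)} = P (f ⁻¹' {b} ∩ g ⁻¹' {c}) := by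
  rw [Measure.map_apply (hf.prodMk hg) (measurableSet_singleton _),
    ← Set.singleton_prod_singleton, Set.mk_preimage_prod]

end MeasureTheory

theorem fsiw_unbiased_general
    {Ω X : Type*} [MeasurableSpace Ω]
    [MeasurableSpace X] [MeasurableSingletonClass X] [Countable X]
    (P : Measure Ω) [IsProbabilityMeasure P]
    (x : Ω → X) (Yv Cv : Ω → Bool)
    (hx : Measurable x) (hYv : Measurable Yv) (hCv : Measurable Cv)
    (hpos : ∀ (a : X) (b : Bool),
      0 < P (x ⁻¹' {a}) → 0 < P (x ⁻¹' {a} ∩ Yv ⁻¹' {b}))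
    (h : X → ℝ)
    (ℓ : ℝ → Bool → ℝ) :
    ∫ ω, ((P (x ⁻¹' {x ω} ∩ Cv ⁻¹' {Yv ω})).toReal
            / (P (x ⁻¹' {x ω} ∩ Yv ⁻¹' {Yv ω})).toReal) * ℓ (h (x ω)) (Yv ω) ∂P
      = ∫ ω, ℓ (h (x ω)) (Cv ω) ∂P := by
  set μ := P.map fun ω => (x ω, Yv ω)
  set ν := P.map fun ω => (x ω, Cv ω)
  have hμ : ∀ a b, μ {(a, b)} = P (x ⁻¹' {a} ∩ Yv ⁻¹' {b}) :=
    Measure.map_prodMk_apply_singleton P hx hYv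
  have hν : ∀ a b, ν {(a, b)} = P (x ⁻¹' {a} ∩ Cv ⁻¹' {b}) :=
    Measure.map_prodMk_apply_singleton P hx hCv
  have hνμ : ν ≪ μ := by
    refine Measure.absolutelyContinuous_of_forall_singleton fun ⟨a, b⟩ hμab => ?_
    have hxa : P (x ⁻¹' {a}) = 0 := by
      by_contra hxa
      exact (hpos a b (pos_iff_ne_zero.mpr hxa)).ne' (hμ a b ▸ hμab)
    exact hν a b ▸ measure_mono_null Set.inter_subset_left hxa
  calc _ = ∫ p, (ν.real {p} / μ.real {p}) • ℓ (h p.1) p.2 ∂μ := by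
        rw [integral_map (hx.prodMk hYv).aemeasurable
          StronglyMeasurable.of_discrete.aestronglyMeasurable]
        simp only [measureReal_def, hμ, hν, smul_eq_mul]
    _ = ∫ p, ℓ (h p.1) p.2 ∂ν := integral_measureReal_div_smul_eq hνμ _
    _ = _ := integral_map (hx.prodMk hCv).aemeasurable
          StronglyMeasurable.of_discrete.aestronglyMeasurable

/-- Consistency of feedback shift importance weighting (FSIW): on a countable input space, with
`C` the true-conversion indicator and `Y` the training-term observed-conversion indicator, if
`P(Y = y | X = x) > 0` whenever `P(X = x) > 0`, then weighting by
`w(x, y) = P(C = y | X = x) / P(Y = y | X = x) = P(X = x, C = y) / P(X = x, Y = y)` gives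
`E_{(x,y)}[w(x,y) ℓ(h(x), y)] = E_{(x,c)}[ℓ(h(x), c)]`. -/
theorem fsiw_unbiased
    {Ω X : Type*} [MeasurableSpace Ω]
    [MeasurableSpace X] [MeasurableSingletonClass X] [Countable X]
    (P : Measure Ω) [IsProbabilityMeasure P]
    (x : Ω → X) (Yv Cv : Ω → Bool)
    (hx : Measurable x) (hYv : Measurable Yv) (hCv : Measurable Cv)
    (hpos : ∀ (a : X) (b : Bool),
      0 < P (x ⁻¹' {a}) → 0 < P (x ⁻¹' {a} ∩ Yv ⁻¹' {b}))
    (h : X → ℝ) (hh : Measurable h)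
    (ℓ : ℝ → Bool → ℝ) (hℓ : Measurable fun z : ℝ × Bool => ℓ z.1 z.2)
    (C : ℝ) (hC : ∀ r b, |ℓ r b| ≤ C) :
    ∫ ω, ((P (x ⁻¹' {x ω} ∩ Cv ⁻¹' {Yv ω})).toReal
            / (P (x ⁻¹' {x ω} ∩ Yv ⁻¹' {Yv ω})).toReal) * ℓ (h (x ω)) (Yv ω) ∂P
      = ∫ ω, ℓ (h (x ω)) (Cv ω) ∂P :=
  fsiw_unbiased_general P x Yv Cv hx hYv hCv hpos h ℓ
end

section
/- (Elkan–Noto lemma.) Let (x, y, s) be random variables where y ∈ {0,1} is a binary label and s ∈ {0,1} indicates whether the example is labeled. Assume (i) only positive examples are labeled, i.e., P(y = 1 ∧ s = 1 | x) = P(s = 1 | x) (equivalently s = 1 implies y = 1), (ii) the selected-completely-at-random condition P(s = 1 | y = 1, x) = P(s = 1 | y = 1), and (iii) c := P(s = 1 | y = 1) > 0. Then for every x, P(y = 1 | x) = P(s = 1 | x)/c. -/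
open MeasureTheory ProbabilityTheory

/-- No `d ≠ 0` or `e ≠ 0` is needed: with `x / 0 = 0` both sides vanish together. -/
theorem div_eq_div_div_of_mul_eq_mul {K : Type*} [Field K] {a b c d e : K}
    (h : c * a = b * d) (hc : c ≠ 0) : a / e = b / e / (c / d) := by
  rw [eq_div_of_mul_eq hc (by linear_combination h : a * c = b * d), div_div_eq_mul_div]
  ring

theorem elkan_noto_lemma_general
    {Ω X : Type*} [MeasurableSpace Ω] [MeasurableSpace X]
    (P : Measure Ω) [IsProbabilityMeasure P]
    (x : Ω → X) (y s : Ω → Bool)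
    (honly_pos : ∀ a : X,
      P (x ⁻¹' {a} ∩ {ω | y ω = true ∧ s ω = true}) = P (x ⁻¹' {a} ∩ {ω | s ω = true}))
    (hscar : ∀ a : X,
      P (x ⁻¹' {a} ∩ {ω | y ω = true ∧ s ω = true}) * P {ω | y ω = true}
        = P {ω | y ω = true ∧ s ω = true} * P (x ⁻¹' {a} ∩ {ω | y ω = true}))
    (hc_pos : 0 < P {ω | y ω = true ∧ s ω = true}) :
    ∀ a : X, 0 < P (x ⁻¹' {a}) →
      (P (x ⁻¹' {a} ∩ {ω | y ω = true})).toReal / (P (x ⁻¹' {a})).toReal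
        = ((P (x ⁻¹' {a} ∩ {ω | s ω = true})).toReal / (P (x ⁻¹' {a})).toReal)
            / ((P {ω | y ω = true ∧ s ω = true}).toReal / (P {ω | y ω = true}).toReal) := by
  intro a _
  have key : P {ω | y ω = true ∧ s ω = true} * P (x ⁻¹' {a} ∩ {ω | y ω = true})
      = P (x ⁻¹' {a} ∩ {ω | s ω = true}) * P {ω | y ω = true} := by
    rw [← hscar a, honly_pos a]
  refine div_eq_div_div_of_mul_eq_mul ?_
    (ENNReal.toReal_ne_zero.2 ⟨hc_pos.ne', measure_ne_top _ _⟩)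
  rw [← ENNReal.toReal_mul, ← ENNReal.toReal_mul, key]

/-- Elkan–Noto lemma for PU learning: if (i) only positive examples are labeled, i.e.
`P(y = 1 ∧ s = 1 | x) = P(s = 1 | x)` (stated per `x` in cleared form), (ii) labeling is selected
completely at random, `P(s = 1 | y = 1, x) = P(s = 1 | y = 1)` (cleared form), and (iii)
`c := P(s = 1 | y = 1) > 0`, then for every `x` (with `P(x) > 0`),
`P(y = 1 | x) = P(s = 1 | x) / c`. -/
theorem elkan_noto_lemma
    {Ω X : Type*} [MeasurableSpace Ω] [MeasurableSpace X]
    (P : Measure Ω) [IsProbabilityMeasure P]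
    (x : Ω → X) (y s : Ω → Bool)
    (hx : Measurable x) (hy : Measurable y) (hs : Measurable s)
    (honly_pos : ∀ a : X,
      P (x ⁻¹' {a} ∩ {ω | y ω = true ∧ s ω = true}) = P (x ⁻¹' {a} ∩ {ω | s ω = true}))
    (hscar : ∀ a : X,
      P (x ⁻¹' {a} ∩ {ω | y ω = true ∧ s ω = true}) * P {ω | y ω = true}
        = P {ω | y ω = true ∧ s ω = true} * P (x ⁻¹' {a} ∩ {ω | y ω = true}))
    (hy_pos : 0 < P {ω | y ω = true})
    (hc_pos : 0 < P {ω | y ω = true ∧ s ω = true}) :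
    ∀ a : X, 0 < P (x ⁻¹' {a}) →
      (P (x ⁻¹' {a} ∩ {ω | y ω = true})).toReal / (P (x ⁻¹' {a})).toReal
        = ((P (x ⁻¹' {a} ∩ {ω | s ω = true})).toReal / (P (x ⁻¹' {a})).toReal)
            / ((P {ω | y ω = true ∧ s ω = true}).toReal / (P {ω | y ω = true}).toReal) :=
  elkan_noto_lemma_general P x y s honly_pos hscar hc_pos
end

section
/- Let (x, y, s) be as in the PU learning setup: y, s ∈ {0,1}, s = 1 implies y = 1, P(s = 1 | y = 1, x) = P(s = 1 | y = 1) =: c with 0 < c, and suppose P(s = 1 | x) < 1 and P(s = 0 | x) > 0. Then the posterior probability that an unlabeled example is positive satisfies P(y = 1 | x, s = 0) = ((1 − c)/c) · P(s = 1 | x)/(1 − P(s = 1 | x)). -/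
open MeasureTheory ProbabilityTheory

/-- Posterior probability that an unlabeled example is positive in PU learning: under the PU
assumptions (`s = 1` implies `y = 1`, stated per `x` in cleared form; selected completely at
random `P(s = 1 | y = 1, x) = P(s = 1 | y = 1) =: c` in cleared form; `c > 0`), if moreover
`P(s = 1 | x) < 1` and `P(s = 0 | x) > 0`, then
`P(y = 1 | x, s = 0) = ((1 − c)/c) · P(s = 1 | x) / (1 − P(s = 1 | x))`. -/
theorem pu_unlabeled_posterior
    {Ω X : Type*} [MeasurableSpace Ω] [MeasurableSpace X]
    (P : Measure Ω) [IsProbabilityMeasure P]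
    (x : Ω → X) (y s : Ω → Bool)
    (hx : Measurable x) (hy : Measurable y) (hs : Measurable s)
    (honly_pos : ∀ a : X,
      P (x ⁻¹' {a} ∩ {ω | y ω = true ∧ s ω = true}) = P (x ⁻¹' {a} ∩ {ω | s ω = true}))
    (hscar : ∀ a : X,
      P (x ⁻¹' {a} ∩ {ω | y ω = true ∧ s ω = true}) * P {ω | y ω = true}
        = P {ω | y ω = true ∧ s ω = true} * P (x ⁻¹' {a} ∩ {ω | y ω = true}))
    (hy_pos : 0 < P {ω | y ω = true})
    (hc_pos : 0 < P {ω | y ω = true ∧ s ω = true}) :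
    ∀ a : X, 0 < P (x ⁻¹' {a}) →
      P (x ⁻¹' {a} ∩ {ω | s ω = true}) < P (x ⁻¹' {a}) →
      0 < P (x ⁻¹' {a} ∩ {ω | s ω = false}) →
      (P (x ⁻¹' {a} ∩ {ω | y ω = true ∧ s ω = false})).toReal
          / (P (x ⁻¹' {a} ∩ {ω | s ω = false})).toReal
        = ((1 - (P {ω | y ω = true ∧ s ω = true}).toReal / (P {ω | y ω = true}).toReal)
              / ((P {ω | y ω = true ∧ s ω = true}).toReal / (P {ω | y ω = true}).toReal))
          * (((P (x ⁻¹' {a} ∩ {ω | s ω = true})).toReal / (P (x ⁻¹' {a})).toReal)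
              / (1 - (P (x ⁻¹' {a} ∩ {ω | s ω = true})).toReal / (P (x ⁻¹' {a})).toReal)) := by

  intro a hA hlt hpos0
  set A := x ⁻¹' {a} with hAdef
  set T := {ω : Ω | s ω = true} with hTdef
  set Y := {ω : Ω | y ω = true} with hYdef
  have hTm : MeasurableSet T := hs (measurableSet_singleton true)
  have hsF : {ω : Ω | s ω = false} = Tᶜ := by
    ext ω; simp [hTdef]
  have hysT : {ω : Ω | y ω = true ∧ s ω = true} = Y ∩ T := rfl
  have hysF : {ω : Ω | y ω = true ∧ s ω = false} = Y \ T := by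
    ext ω; simp [hTdef, hYdef, Set.mem_diff]
  have hACT : A ∩ {ω : Ω | s ω = false} = A \ T := by
    rw [hsF, Set.diff_eq]
  have hAYT : A ∩ {ω : Ω | y ω = true ∧ s ω = false} = (A ∩ Y) \ T := by
    rw [hysF]; ext ω; simp [Set.mem_diff, Set.mem_inter_iff]; tauto
  have hAYS : A ∩ {ω : Ω | y ω = true ∧ s ω = true} = (A ∩ Y) ∩ T := by
    rw [hysT, Set.inter_assoc]
  -- finiteness
  have fin : ∀ S : Set Ω, P S ≠ ⊤ := fun S => measure_ne_top P S
  -- additivity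
  have h1 : P (A ∩ T) + P (A \ T) = P A := measure_inter_add_diff A hTm
  have h2 : P ((A ∩ Y) ∩ T) + P ((A ∩ Y) \ T) = P (A ∩ Y) :=
    measure_inter_add_diff (A ∩ Y) hTm
  -- real versions
  have h1r : (P (A ∩ T)).toReal + (P (A \ T)).toReal = (P A).toReal := by
    rw [← ENNReal.toReal_add (fin _) (fin _), h1]
  have h2r : (P ((A ∩ Y) ∩ T)).toReal + (P ((A ∩ Y) \ T)).toReal = (P (A ∩ Y)).toReal := by
    rw [← ENNReal.toReal_add (fin _) (fin _), h2]
  have honly := honly_pos a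
  rw [hAYS] at honly
  have hscar' := hscar a
  rw [hAYS, hysT] at hscar'
  have hscarr : (P ((A ∩ Y) ∩ T)).toReal * (P Y).toReal
      = (P (Y ∩ T)).toReal * (P (A ∩ Y)).toReal := by
    rw [← ENNReal.toReal_mul, ← ENNReal.toReal_mul, hscar']
  have honlyr : (P ((A ∩ Y) ∩ T)).toReal = (P (A ∩ T)).toReal := by rw [honly]
  -- positivity
  have hpy : 0 < (P Y).toReal := ENNReal.toReal_pos hy_pos.ne' (fin _)
  have hpys : 0 < (P (Y ∩ T)).toReal := ENNReal.toReal_pos hc_pos.ne' (fin _)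
  have hrA : 0 < (P A).toReal := ENNReal.toReal_pos hA.ne' (fin _)
  have hltr : (P (A ∩ T)).toReal < (P A).toReal :=
    (ENNReal.toReal_lt_toReal (fin _) (fin _)).mpr hlt
  rw [hACT, hAYT, hysT]
  set rA := (P A).toReal
  set rAs := (P (A ∩ T)).toReal
  set rAy := (P (A ∩ Y)).toReal
  set py := (P Y).toReal
  set pys := (P (Y ∩ T)).toReal
  have hdiff : (P (A \ T)).toReal = rA - rAs := by linarith
  have hdiff2 : (P ((A ∩ Y) \ T)).toReal = rAy - rAs := by
    rw [honlyr] at h2r; linarith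
  rw [hdiff, hdiff2]
  have hAy : rAy = rAs * py / pys := by
    rw [honlyr] at hscarr
    field_simp
    linarith [hscarr]
  have hpos : (0:ℝ) < rA - rAs := by linarith
  rw [hAy]
  have h1s : 1 - rAs / rA = (rA - rAs) / rA := by field_simp
  rw [h1s]
  field_simp
end

section
/- Let (x, y, s) be random variables on a countable space with y, s ∈ {0,1} and s = 1 implying y = 1 (so P(y = 0 ∧ s = 1) = 0). Then for any bounded function h: X × {0,1} → ℝ, E_{x,y,s}[h(x, y)] = Σ_x P(x) · ( P(s = 1 | x) h(x, 1) + P(s = 0 | x) · ( P(y = 1 | x, s = 0) h(x, 1) + P(y = 0 | x, s = 0) h(x, 0) ) ), where terms with P(s = 0 | x) = 0 are interpreted as zero; i.e., the expectation decomposes into the contribution of labeled (hence positive) examples and a weighted combination over unlabeled examples with weight w(x) = P(y = 1 | x, s = 0). -/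
/-!
Both sides are sums over the countably many atoms `(a, y, s)`. On the fibre over `a`, the law of
total probability `P(x = a) = P(x = a, s = 1) + P(x = a, s = 0)` and
`P(x = a, s = 0) = P(a, 1, 0) + P(a, 0, 0)` cancels every conditional probability against its
denominator, and `P(a, 0, 1) = 0` identifies the labelled mass with `P(a, 1, 1)`.
-/

open MeasureTheory

theorem mul_div_mul_add_div_mul_of_add_eq {K : Type*} [Field K] [LinearOrder K]
    [IsStrictOrderedRing K] {u v m : K} (hu : 0 ≤ u) (hv : 0 ≤ v) (hm : u + v = m) (A B : K) :
    m * (u / m * A + v / m * B) = u * A + v * B := by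
  -- with `u, v ≥ 0`, `m = 0` forces `u = v = 0`, so the junk value `0 / 0 = 0` is harmless
  have hu' : m = 0 → u = 0 := fun hm0 => by linarith
  have hv' : m = 0 → v = 0 := fun hm0 => by linarith
  rw [mul_add, ← mul_assoc, ← mul_assoc, mul_div_cancel_of_imp' hu', mul_div_cancel_of_imp' hv']

theorem hasSum_integral_countable {α E : Type*} [MeasurableSpace α] [MeasurableSingletonClass α]
    [Countable α] [NormedAddCommGroup E] [NormedSpace ℝ E] [CompleteSpace E]
    {μ : Measure α} {f : α → E} (hf : Integrable f μ) :
    HasSum (fun x => μ.real {x} • f x) (∫ x, f x ∂μ) := by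
  rw [← Measure.sum_smul_dirac μ] at hf
  convert hasSum_integral_measure hf using 1
  · ext x
    rw [integral_smul_measure, integral_dirac, measureReal_def]
  · rw [Measure.sum_smul_dirac]

theorem integral_prod_eq_tsum_sum {α β E : Type*} [MeasurableSpace α] [MeasurableSpace β]
    [MeasurableSingletonClass (α × β)] [Countable α] [Fintype β]
    [NormedAddCommGroup E] [NormedSpace ℝ E] [CompleteSpace E]
    {μ : Measure (α × β)} {f : α × β → E} (hf : Integrable f μ) :
    ∫ z, f z ∂μ = ∑' a, ∑ b, μ.real {(a, b)} • f (a, b) :=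
  ((hasSum_integral_countable hf).prod_fiberwise fun _ => hasSum_fintype _).tsum_eq.symm

section Fiber

variable {α β : Type*} [MeasurableSpace α] [MeasurableSpace β] [MeasurableSingletonClass (α × β)]
  [Fintype β] (μ : Measure (α × β)) [IsFiniteMeasure μ] (a : α)

theorem measureReal_fst_eq_and (q : β → Prop) [DecidablePred q] :
    μ.real {z | z.1 = a ∧ q z.2} = ∑ b with q b, μ.real {(a, b)} := by
  have hset : {z : α × β | z.1 = a ∧ q z.2} = ⋃ b ∈ Finset.univ.filter q, {(a, b)} := by
    ext ⟨x, y⟩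
    simp [and_comm, eq_comm]
  rw [hset, measureReal_biUnion_finset]
  · intro b _ c _ hbc
    simpa using hbc
  · simp

theorem measureReal_fst_eq :
    μ.real {z | z.1 = a} = ∑ b, μ.real {(a, b)} := by
  simpa using measureReal_fst_eq_and μ a (fun _ => True)

end Fiber

theorem pu_expectation_decomposition_general
    {X : Type*} [MeasurableSpace X] [MeasurableSingletonClass X] [Countable X]
    (P : Measure (X × Bool × Bool)) [IsProbabilityMeasure P]
    (hps : P {z | z.2.1 = false ∧ z.2.2 = true} = 0)
    (h : X → Bool → ℝ)
    (C : ℝ) (hC : ∀ a b, |h a b| ≤ C) :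
    ∫ z : X × Bool × Bool, h z.1 z.2.1 ∂P
      = ∑' a : X, (P {z | z.1 = a}).toReal *
          (((P {z | z.1 = a ∧ z.2.2 = true}).toReal / (P {z | z.1 = a}).toReal) * h a true
            + ((P {z | z.1 = a ∧ z.2.2 = false}).toReal / (P {z | z.1 = a}).toReal) *
              (((P {z | z.1 = a ∧ z.2.1 = true ∧ z.2.2 = false}).toReal
                  / (P {z | z.1 = a ∧ z.2.2 = false}).toReal) * h a true
                + ((P {z | z.1 = a ∧ z.2.1 = false ∧ z.2.2 = false}).toReal
                  / (P {z | z.1 = a ∧ z.2.2 = false}).toReal) * h a false)) := by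
  have hint : Integrable (fun z : X × Bool × Bool => h z.1 z.2.1) P :=
    .of_bound .of_discrete C (.of_forall fun z => hC z.1 z.2.1)
  rw [integral_prod_eq_tsum_sum hint]
  refine tsum_congr fun a => ?_
  have hft : P.real {(a, false, true)} = 0 :=
    (measureReal_eq_zero_iff).mpr (measure_mono_null (by simp) hps)
  simp only [← measureReal_def]
  have hx : P.real {z | z.1 = a}
      = P.real {(a, true, true)} + (P.real {(a, true, false)} + P.real {(a, false, false)}) := by
    simp [measureReal_fst_eq, Fintype.sum_prod_type, hft, add_assoc]
  have hs1 : P.real {z | z.1 = a ∧ z.2.2 = true} = P.real {(a, true, true)} := by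
    simp [measureReal_fst_eq_and P a (fun c => c.2 = true), Finset.sum_filter,
      Fintype.sum_prod_type, hft]
  have hs0 : P.real {z | z.1 = a ∧ z.2.2 = false}
      = P.real {(a, true, false)} + P.real {(a, false, false)} := by
    simp [measureReal_fst_eq_and P a (fun c => c.2 = false), Finset.sum_filter,
      Fintype.sum_prod_type]
  have hy1 : P.real {z | z.1 = a ∧ z.2.1 = true ∧ z.2.2 = false} = P.real {(a, true, false)} := by
    simp [measureReal_fst_eq_and P a (fun c => c.1 = true ∧ c.2 = false), Finset.sum_filter,
      Fintype.sum_prod_type]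
  have hy0 : P.real {z | z.1 = a ∧ z.2.1 = false ∧ z.2.2 = false}
      = P.real {(a, false, false)} := by
    simp [measureReal_fst_eq_and P a (fun c => c.1 = false ∧ c.2 = false), Finset.sum_filter,
      Fintype.sum_prod_type]
  rw [hx, hs1, hs0, hy1, hy0,
    mul_div_mul_add_div_mul_of_add_eq measureReal_nonneg (by positivity) rfl,
    mul_div_mul_add_div_mul_of_add_eq measureReal_nonneg measureReal_nonneg rfl]
  simp only [smul_eq_mul, Fintype.sum_prod_type, Fintype.sum_bool, hft, zero_mul, zero_add]
  ring

/-- PU learning expectation decomposition: on a countable space with `z = (x, y, s)`, `y, s`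
boolean and `s = 1` implying `y = 1` (i.e. `P(y = 0 ∧ s = 1) = 0`), for any bounded measurable
`h : X × {0,1} → ℝ`,
`E[h(x, y)] = ∑_x P(x) (P(s=1|x) h(x,1)
  + P(s=0|x) (P(y=1|x,s=0) h(x,1) + P(y=0|x,s=0) h(x,0)))`,
where terms with a zero denominator (interpreted as `0/0 = 0`) vanish. -/
theorem pu_expectation_decomposition
    {X : Type*} [MeasurableSpace X] [MeasurableSingletonClass X] [Countable X]
    (P : Measure (X × Bool × Bool)) [IsProbabilityMeasure P]
    (hps : P {z | z.2.1 = false ∧ z.2.2 = true} = 0)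
    (h : X → Bool → ℝ) (hh : Measurable fun z : X × Bool => h z.1 z.2)
    (C : ℝ) (hC : ∀ a b, |h a b| ≤ C) :
    ∫ z : X × Bool × Bool, h z.1 z.2.1 ∂P
      = ∑' a : X, (P {z | z.1 = a}).toReal *
          (((P {z | z.1 = a ∧ z.2.2 = true}).toReal / (P {z | z.1 = a}).toReal) * h a true
            + ((P {z | z.1 = a ∧ z.2.2 = false}).toReal / (P {z | z.1 = a}).toReal) *
              (((P {z | z.1 = a ∧ z.2.1 = true ∧ z.2.2 = false}).toReal
                  / (P {z | z.1 = a ∧ z.2.2 = false}).toReal) * h a true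
                + ((P {z | z.1 = a ∧ z.2.1 = false ∧ z.2.2 = false}).toReal
                  / (P {z | z.1 = a ∧ z.2.2 = false}).toReal) * h a false)) :=
  pu_expectation_decomposition_general P hps h C hC
end

section
/- (Unbiasedness of the backward-corrected loss under label noise.) Let K ∈ ℕ, let T ∈ ℝ^{K×K} be an invertible noise transition matrix with entries T_{i,j} = P(ỹ = j | y = i), let p ∈ ℝ^K be the clean class-posterior probability vector (p_i = P(y = i | x), p_i ≥ 0, Σ_i p_i = 1), and let the noisy posterior be p̃ = Tᵀ p, i.e., p̃_j = Σ_i p_i T_{i,j}. For any loss vector ℓ ∈ ℝ^K (with ℓ_y the loss of the prediction against label y), define the corrected loss vector ℓ̃ = T^{-1} ℓ. Then E_{ỹ | x}[ℓ̃_{ỹ}] = Σ_j p̃_j (T^{-1} ℓ)_j = Σ_i p_i ℓ_i = E_{y | x}[ℓ_y]; i.e., the corrected loss is unbiased for the clean-label loss. -/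
open Matrix

/-- Unbiasedness of the backward-corrected loss under label noise: with an invertible noise
transition matrix `T` (`T i j = P(ỹ = j | y = i)`), clean class-posterior vector `p`, noisy
posterior `p̃ = Tᵀ p`, and corrected loss vector `ℓ̃ = T⁻¹ ℓ`, one has
`E_{ỹ|x}[ℓ̃_ỹ] = ∑_j p̃_j (T⁻¹ℓ)_j = ∑_i p_i ℓ_i = E_{y|x}[ℓ_y]`. -/
theorem backward_corrected_loss_unbiased
    (K : ℕ) (T : Matrix (Fin K) (Fin K) ℝ) (hT : IsUnit T.det)
    (p : Fin K → ℝ) (hp0 : ∀ i, 0 ≤ p i) (hp1 : ∑ i, p i = 1)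
    (ℓ : Fin K → ℝ) :
    ∑ j, (Tᵀ.mulVec p) j * (T⁻¹.mulVec ℓ) j = ∑ i, p i * ℓ i := by
  have h : ∑ j, (Tᵀ.mulVec p) j * (T⁻¹.mulVec ℓ) j
      = (Tᵀ.mulVec p) ⬝ᵥ (T⁻¹.mulVec ℓ) := rfl
  rw [h, ← vecMul_transpose, transpose_transpose T, dotProduct_mulVec, vecMul_vecMul,
    mul_nonsing_inv T hT, vecMul_one]
  rfl
end

section
/- Let X be a measurable space with σ-finite measure μ, and let p_tr and p_te be probability densities on X with p_tr(x) + p_te(x) > 0 μ-a.e. Then the functional V(D) = ∫ [p_tr(x) log D(x) + p_te(x) log(1 − D(x))] dμ(x) over measurable functions D: X → (0,1) is maximized by D*(x) = p_tr(x)/(p_tr(x) + p_te(x)) (μ-a.e. where defined), and consequently 1 − D*(x) = p_te(x)/(p_tr(x) + p_te(x)), which for p_te(x) > 0 equals 1/(p_tr(x)/p_te(x) + 1). -/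
/-!
At every point the integrand `a log t + b log (1 - t)` (with `a, b ≥ 0`, `a + b > 0`) is maximized
over `t ∈ (0, 1)` at `t = a / (a + b)`: by `log x ≤ x - 1`, each of the two terms is at most its
value at the optimum plus `t (a + b) - a`, resp. `(1 - t) (a + b) - b`, and these sum to zero.
Integrating this pointwise bound gives the maximality of `D*`.
-/

open MeasureTheory Real

lemma mul_log_le_mul_log_div_add_sub {a c s : ℝ} (ha : 0 ≤ a) (hc : 0 < c) (hs : 0 < s) :
    a * log c ≤ a * log (a / s) + (c * s - a) := by
  rcases ha.eq_or_lt with rfl | ha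
  · simpa using (mul_pos hc hs).le
  have hlog : log c - log (a / s) ≤ c / (a / s) - 1 := by
    rw [← log_div hc.ne' (by positivity)]
    exact log_le_sub_one_of_pos (by positivity)
  have hscale : a * (c / (a / s) - 1) = c * s - a := by field_simp
  nlinarith [mul_le_mul_of_nonneg_left hlog ha.le]

lemma mul_log_add_mul_log_one_sub_le {a b t : ℝ} (ha : 0 ≤ a) (hb : 0 ≤ b) (hab : 0 < a + b)
    (ht : t ∈ Set.Ioo (0 : ℝ) 1) :
    a * log t + b * log (1 - t) ≤ a * log (a / (a + b)) + b * log (1 - a / (a + b)) := by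
  have hopt : 1 - a / (a + b) = b / (a + b) := by field_simp; ring
  rw [hopt]
  have hA := mul_log_le_mul_log_div_add_sub ha ht.1 hab
  have hB := mul_log_le_mul_log_div_add_sub hb (sub_pos.2 ht.2) hab
  linarith

lemma mul_log_add_mul_log_one_sub_nonpos {a b t : ℝ} (ha : 0 ≤ a) (hb : 0 ≤ b)
    (ht : t ∈ Set.Ioo (0 : ℝ) 1) :
    a * log t + b * log (1 - t) ≤ 0 := by
  have hlog : log t ≤ 0 := log_nonpos ht.1.le ht.2.le
  have hlog' : log (1 - t) ≤ 0 := log_nonpos (by linarith [ht.2]) (by linarith [ht.1])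
  nlinarith [mul_nonpos_of_nonneg_of_nonpos ha hlog, mul_nonpos_of_nonneg_of_nonpos hb hlog']

/-- Unlike `integral_mono_ae`, `g` need not be integrable: otherwise `∫ g = 0 ≥ ∫ f`. -/
lemma integral_le_integral_of_ae_le_of_nonpos {X : Type*} [MeasurableSpace X] {μ : Measure X}
    {f g : X → ℝ} (hf : Integrable f μ) (hfg : f ≤ᵐ[μ] g) (hf0 : ∀ x, f x ≤ 0) :
    ∫ x, f x ∂μ ≤ ∫ x, g x ∂μ := by
  by_cases hg : Integrable g μ
  · exact integral_mono_ae hf hg hfg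
  · rw [integral_undef hg]
    exact integral_nonpos hf0

theorem iwan_optimal_discriminator_general
    {X : Type*} [MeasurableSpace X] (μ : Measure X)
    (ptr pte : X → ℝ)
    (h0tr : ∀ x, 0 ≤ ptr x) (h0te : ∀ x, 0 ≤ pte x)
    (hpos : ∀ᵐ x ∂μ, 0 < ptr x + pte x) :
    (∀ D : X → ℝ, Measurable D → (∀ x, D x ∈ Set.Ioo (0 : ℝ) 1) →
        Integrable (fun x => ptr x * Real.log (D x) + pte x * Real.log (1 - D x)) μ →
        ∫ x, ptr x * Real.log (D x) + pte x * Real.log (1 - D x) ∂μ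
          ≤ ∫ x, ptr x * Real.log (ptr x / (ptr x + pte x))
              + pte x * Real.log (1 - ptr x / (ptr x + pte x)) ∂μ)
    ∧ (∀ x, 0 < pte x →
        1 - ptr x / (ptr x + pte x) = pte x / (ptr x + pte x)
        ∧ pte x / (ptr x + pte x) = 1 / (ptr x / pte x + 1)) := by
  refine ⟨fun D _ hD hint => ?_, fun x hx => ?_⟩
  · refine integral_le_integral_of_ae_le_of_nonpos hint ?_
      fun x => mul_log_add_mul_log_one_sub_nonpos (h0tr x) (h0te x) (hD x)
    filter_upwards [hpos] with x hx
    exact mul_log_add_mul_log_one_sub_le (h0tr x) (h0te x) hx (hD x)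
  · have hs : ptr x + pte x ≠ 0 := by linarith [h0tr x]
    constructor
    · rw [one_sub_div hs, add_sub_cancel_left]
    · field_simp

/-- IWAN optimal discriminator: the GAN objective
`V(D) = ∫ p_tr log D + p_te log(1 − D) dμ` over measurable `D : X → (0,1)` is maximized by
`D*(x) = p_tr(x)/(p_tr(x) + p_te(x))`, and `1 − D*(x) = p_te(x)/(p_tr(x) + p_te(x))`, which for
`p_te(x) > 0` equals `1/(p_tr(x)/p_te(x) + 1)`. -/
theorem iwan_optimal_discriminator
    {X : Type*} [MeasurableSpace X] (μ : Measure X) [SigmaFinite μ]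
    (ptr pte : X → ℝ) (hm1 : Measurable ptr) (hm2 : Measurable pte)
    (h0tr : ∀ x, 0 ≤ ptr x) (h0te : ∀ x, 0 ≤ pte x)
    (hitr : Integrable ptr μ) (hite : Integrable pte μ)
    (htr1 : ∫ x, ptr x ∂μ = 1) (hte1 : ∫ x, pte x ∂μ = 1)
    (hpos : ∀ᵐ x ∂μ, 0 < ptr x + pte x) :
    (∀ D : X → ℝ, Measurable D → (∀ x, D x ∈ Set.Ioo (0 : ℝ) 1) →
        Integrable (fun x => ptr x * Real.log (D x) + pte x * Real.log (1 - D x)) μ →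
        ∫ x, ptr x * Real.log (D x) + pte x * Real.log (1 - D x) ∂μ
          ≤ ∫ x, ptr x * Real.log (ptr x / (ptr x + pte x))
              + pte x * Real.log (1 - ptr x / (ptr x + pte x)) ∂μ)
    ∧ (∀ x, 0 < pte x →
        1 - ptr x / (ptr x + pte x) = pte x / (ptr x + pte x)
        ∧ pte x / (ptr x + pte x) = 1 / (ptr x / pte x + 1)) :=
  iwan_optimal_discriminator_general μ ptr pte h0tr h0te hpos
end

section
/- Let Z be a measurable space with σ-finite measure μ, q a probability density on Z, and w: Z → ℝ a measurable importance weight with 0 < m ≤ w(z) ≤ M < ∞ for all z, and set p̄ = ∫ w q dμ (the normalizing constant, so p(z) := w(z)q(z)/p̄ is the target density). For z ∈ Z and z_2, …, z_k i.i.d. ∼ q, define q̃_k(z | z_{2:k}) = w(z) q(z) / ( (1/k)(w(z) + Σ_{j=2}^k w(z_j)) ). Then for every fixed z: (i) q̃_1(z) = q(z) when k = 1; and (ii) as k → ∞, E_{z_2,…,z_k ∼ q}[ q̃_k(z | z_{2:k}) ] → w(z) q(z) / p̄ = p(z), i.e., the expected importance-weighted distribution converges pointwise to the target (posterior) density. 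-/
open MeasureTheory Filter
open scoped ENNReal NNReal

namespace IWAEaux

lemma integrable_of_bounded {α : Type*} [MeasurableSpace α] (P : Measure α)
    [IsFiniteMeasure P] {f : α → ℝ} (hf : Measurable f) (C : ℝ) (hC : ∀ x, |f x| ≤ C) :
    Integrable f P :=
  (integrable_const C).mono' hf.aestronglyMeasurable (Eventually.of_forall fun x => by
    simpa using hC x)

lemma integral_eval {Z : Type*} [MeasurableSpace Z] (ν : Measure Z) [IsProbabilityMeasure ν]
    {n : ℕ} (f : Z → ℝ) (a : Fin n) :
    ∫ x : Fin n → Z, f (x a) ∂(Measure.pi fun _ => ν) = ∫ z, f z ∂ν := by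
  letI : MeasureSpace Z := ⟨ν⟩
  have h := MeasureTheory.integral_fintype_prod_eq_prod (𝕜 := ℝ) (μ := fun _ : Fin n => (volume : Measure Z))
    (fun i => if i = a then f else (fun _ => (1:ℝ)))
  have h1 : ∀ x : Fin n → Z,
      (∏ i, (if i = a then f else (fun _ => (1:ℝ))) (x i)) = f (x a) := by
    intro x
    have : ∀ i, (if i = a then f else (fun _ => (1:ℝ))) (x i)
        = (if i = a then f (x i) else 1) := by intro i; split <;> rfl
    simp_rw [this]
    simp [Finset.prod_ite_eq']
  have h2 : ∀ i : Fin n, (∫ z, (if i = a then f else (fun _ => (1:ℝ))) z)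
      = (if i = a then ∫ z, f z else 1) := by
    intro i; split <;> simp [integral_const]
  simp_rw [h1, h2] at h
  have h' := by simpa [Finset.prod_ite_eq'] using h
  exact h'

lemma integral_eval_pair {Z : Type*} [MeasurableSpace Z] (ν : Measure Z) [IsProbabilityMeasure ν]
    {n : ℕ} (f g : Z → ℝ) (a b : Fin n) (hab : a ≠ b) :
    ∫ x : Fin n → Z, f (x a) * g (x b) ∂(Measure.pi fun _ => ν)
      = (∫ z, f z ∂ν) * ∫ z, g z ∂ν := by
  letI : MeasureSpace Z := ⟨ν⟩
  set F : Fin n → Z → ℝ := fun i => if i = a then f else if i = b then g else fun _ => (1:ℝ)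
    with hF
  have h := MeasureTheory.integral_fintype_prod_eq_prod (𝕜 := ℝ) (μ := fun _ : Fin n => (volume : Measure Z)) F
  have h1 : ∀ x : Fin n → Z, (∏ i, F i (x i)) = f (x a) * g (x b) := by
    intro x
    have : ∀ i, F i (x i) = (if i = a then f (x i) else 1) * (if i = b then g (x i) else 1) := by
      intro i
      rcases eq_or_ne i a with rfl | hia
      · simp [hF, hab]
      · rcases eq_or_ne i b with rfl | hib
        · simp [hF, hia]
        · simp [hF, hia, hib]
    simp_rw [this, Finset.prod_mul_distrib]
    simp [Finset.prod_ite_eq']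
  have h2 : ∀ i : Fin n, (∫ z, F i z)
      = (if i = a then ∫ z, f z else 1) * (if i = b then ∫ z, g z else 1) := by
    intro i
    rcases eq_or_ne i a with rfl | hia
    · simp [hF, hab]
    · rcases eq_or_ne i b with rfl | hib
      · simp [hF, hia]
      · simp [hF, hia, hib, integral_const]
  simp_rw [h1, h2, Finset.prod_mul_distrib] at h
  have h' := by simpa [Finset.prod_ite_eq'] using h
  exact h'

lemma integral_sum_sq {Z : Type*} [MeasurableSpace Z] (ν : Measure Z) [IsProbabilityMeasure ν]
    {n : ℕ} (g : Z → ℝ) (hg : Measurable g) (C : ℝ)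
    (hC : ∀ z, |g z| ≤ C) (h0 : ∫ z, g z ∂ν = 0) :
    ∫ x : Fin n → Z, (∑ j, g (x j)) * (∑ j, g (x j)) ∂(Measure.pi fun _ => ν)
      = n * ∫ z, g z * g z ∂ν := by
  have hterm : ∀ i j : Fin n,
      Integrable (fun x : Fin n → Z => g (x i) * g (x j)) (Measure.pi fun _ => ν) := by
    intro i j
    refine integrable_of_bounded _ (((hg.comp (measurable_pi_apply i))).mul
      (hg.comp (measurable_pi_apply j))) (C * C) fun x => ?_
    rw [abs_mul]
    exact mul_le_mul (hC _) (hC _) (abs_nonneg _) ((abs_nonneg (g (x i))).trans (hC (x i)))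
  calc ∫ x : Fin n → Z, (∑ j, g (x j)) * (∑ j, g (x j)) ∂(Measure.pi fun _ => ν)
      = ∫ x : Fin n → Z, ∑ i, ∑ j, g (x i) * g (x j) ∂(Measure.pi fun _ => ν) := by
        simp_rw [Finset.sum_mul_sum]
    _ = ∑ i, ∑ j, ∫ x : Fin n → Z, g (x i) * g (x j) ∂(Measure.pi fun _ => ν) := by
        rw [integral_finset_sum]
        · exact Finset.sum_congr rfl fun i _ => integral_finset_sum _ fun j _ => hterm i j
        · exact fun i _ => integrable_finset_sum _ fun j _ => hterm i j
    _ = ∑ i : Fin n, ∑ j : Fin n, (if i = j then ∫ z, g z * g z ∂ν else 0) := by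
        refine Finset.sum_congr rfl fun i _ => Finset.sum_congr rfl fun j _ => ?_
        rcases eq_or_ne i j with rfl | hij
        · simpa using integral_eval ν (fun z => g z * g z) i
        · simp [hij, integral_eval_pair ν g g i j hij, h0]
    _ = n * ∫ z, g z * g z ∂ν := by
        simp [Finset.sum_ite_eq, Finset.card_univ]

end IWAEaux

set_option maxHeartbeats 1000000 in
/-- The implicit IWAE distribution `q̃_k(z | z_{2:k}) = w(z) q(z) / ((1/k)(w(z) + ∑_j w(z_j)))`
(with `z_2, …, z_k` i.i.d. from `q` and importance weights `0 < m ≤ w ≤ M`): (i) for `k = 1` it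
coincides with `q`, and (ii) as `k → ∞` its expectation over the auxiliary draws converges
pointwise to the target density `p(z) = w(z) q(z) / p̄`, where `p̄ = ∫ w q dμ` is the normalizing
constant. -/
theorem iwae_qtilde_limit
    {Z : Type*} [MeasurableSpace Z] (μ : Measure Z) [SigmaFinite μ]
    (q w : Z → ℝ) (hq : Measurable q) (hw : Measurable w)
    (hq0 : ∀ z, 0 ≤ q z) (hq1 : ∫ z, q z ∂μ = 1)
    (m M : ℝ) (hm : 0 < m) (hbound : ∀ z, m ≤ w z ∧ w z ≤ M) :
    (∀ (z : Z) (zs : Fin 0 → Z),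
        w z * q z / ((1 / (1 : ℝ)) * (w z + ∑ j, w (zs j))) = q z)
    ∧ (∀ z : Z,
        Tendsto
          (fun k : ℕ =>
            ∫ zs : Fin (k - 1) → Z,
              w z * q z / ((1 / (k : ℝ)) * (w z + ∑ j, w (zs j)))
              ∂(Measure.pi fun _ => μ.withDensity fun a => ENNReal.ofReal (q a)))
          atTop
          (nhds (w z * q z / ∫ a, w a * q a ∂μ))) := by
  constructor
  · intro z zs
    simp only [Finset.univ_eq_empty, Finset.sum_empty, add_zero, one_div, inv_one, one_mul]
    rw [mul_comm, mul_div_assoc, div_self (hm.trans_le (hbound z).1).ne', mul_one]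
  intro z
  set ν : Measure Z := μ.withDensity fun a => ENNReal.ofReal (q a) with hν
  -- q is integrable
  have hqi : Integrable q μ := by
    by_contra h
    rw [integral_undef h] at hq1
    exact one_ne_zero hq1.symm
  -- ν is a probability measure
  haveI hνprob : IsProbabilityMeasure ν := by
    constructor
    rw [hν, withDensity_apply _ MeasurableSet.univ, Measure.restrict_univ,
      ← MeasureTheory.ofReal_integral_eq_lintegral_ofReal hqi (Eventually.of_forall hq0),
      hq1, ENNReal.ofReal_one]
  -- integrals over ν
  have hwd : ∀ f : Z → ℝ, ∫ a, f a ∂ν = ∫ a, q a * f a ∂μ := by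
    intro f
    have : ν = μ.withDensity fun a => ((q a).toNNReal : ℝ≥0∞) := rfl
    rw [this, integral_withDensity_eq_integral_smul hq.real_toNNReal]
    refine integral_congr_ae (Eventually.of_forall fun a => ?_)
    simp [NNReal.smul_def, Real.coe_toNNReal _ (hq0 a)]
  have hr : ∫ a, w a * q a ∂μ = ∫ a, w a ∂ν := by
    rw [hwd w]
    exact integral_congr_ae (Eventually.of_forall fun a => mul_comm _ _)
  rw [hr]
  set r : ℝ := ∫ a, w a ∂ν with hrdef
  have hM0 : 0 < M := hm.trans_le ((hbound z).1.trans (hbound z).2)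
  have hwabs : ∀ a, |w a| ≤ M := fun a =>
    abs_le.mpr ⟨by linarith [(hbound a).1, hm, hM0], (hbound a).2⟩
  have hwint : Integrable w ν := IWAEaux.integrable_of_bounded ν hw M hwabs
  have hrm : m ≤ r := by
    have := integral_mono (integrable_const m) hwint (fun a => (hbound a).1)
    simpa using this
  have hrM : r ≤ M := by
    have := integral_mono hwint (integrable_const M) (fun a => (hbound a).2)
    simpa using this
  have hr0 : 0 < r := hm.trans_le hrm
  -- centered weight
  set g : Z → ℝ := fun a => w a - r with hgdef
  have hgmeas : Measurable g := hw.sub measurable_const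
  have hg0 : ∫ a, g a ∂ν = 0 := by
    simp only [hgdef]
    rw [integral_sub hwint (integrable_const r)]
    simp [hrdef]
  have hgabs : ∀ a, |g a| ≤ M := by
    intro a
    simp only [hgdef]
    exact abs_le.mpr ⟨by linarith [(hbound a).1, hrM, hm], by linarith [(hbound a).2, hrm, hm]⟩
  set σ2 : ℝ := ∫ a, g a * g a ∂ν with hσ2def
  have hσ2M : σ2 ≤ M * M := by
    have : ∀ a, g a * g a ≤ M * M := fun a => by
      have := hgabs a
      nlinarith [abs_nonneg (g a), neg_abs_le (g a), le_abs_self (g a)]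
    have hint : Integrable (fun a => g a * g a) ν := by
      refine IWAEaux.integrable_of_bounded ν (hgmeas.mul hgmeas) (M * M) fun a => ?_
      rw [abs_mul]
      exact mul_le_mul (hgabs a) (hgabs a) (abs_nonneg _) ((abs_nonneg (g a)).trans (hgabs a))
    have h := integral_mono hint (integrable_const (M * M)) this
    simpa using h
  have hσ20 : 0 ≤ σ2 := integral_nonneg fun a => mul_self_nonneg _
  set c : ℝ := w z * q z with hcdef
  have hc0 : 0 ≤ c := mul_nonneg (hm.trans_le (hbound z).1).le (hq0 z)
  set D : ℝ := c / (m * r) with hDdef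
  have hD0 : 0 ≤ D := div_nonneg hc0 (mul_nonneg hm.le hr0.le)
  -- the key quantitative bound for k ≥ 1
  have key : ∀ k : ℕ, 1 ≤ k →
      ‖(∫ zs : Fin (k - 1) → Z,
          c / ((1 / (k : ℝ)) * (w z + ∑ j, w (zs j))) ∂(Measure.pi fun _ => ν)) - c / r‖
        ≤ D * ((M + Real.sqrt k * (1 + M * M) / 2) / k) := by
    intro k hk
    set n : ℕ := k - 1 with hndef
    have hkn : (n : ℝ) + 1 = (k : ℝ) := by
      have : n + 1 = k := Nat.succ_pred_eq_of_pos hk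
      exact_mod_cast this
    have hnk : (n : ℝ) ≤ (k : ℝ) := by linarith [hkn]
    have hk0 : (0 : ℝ) < (k : ℝ) := by exact_mod_cast hk
    haveI : IsProbabilityMeasure (Measure.pi fun _ : Fin n => ν) := by infer_instance
    set Pp : Measure (Fin n → Z) := Measure.pi fun _ : Fin n => ν with hPp
    set S : (Fin n → Z) → ℝ := fun x => (1 / (k : ℝ)) * (w z + ∑ j, w (x j)) with hSdef
    have hsummeas : Measurable fun x : Fin n → Z => ∑ j, w (x j) :=
      Finset.measurable_sum _ fun j _ => hw.comp (measurable_pi_apply j)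
    have hSmeas : Measurable S := measurable_const.mul (measurable_const.add hsummeas)
    have hSm : ∀ x, m ≤ S x := by
      intro x
      have hsum : (n : ℝ) * m ≤ ∑ j, w (x j) := by
        calc (n : ℝ) * m = ∑ _j : Fin n, m := by
              rw [Finset.sum_const, Finset.card_univ, Fintype.card_fin, nsmul_eq_mul]
          _ ≤ ∑ j, w (x j) := Finset.sum_le_sum fun j _ => (hbound (x j)).1
      have : (k : ℝ) * m ≤ w z + ∑ j, w (x j) := by
        have := (hbound z).1
        nlinarith [hkn]
      calc m = (1 / (k : ℝ)) * ((k : ℝ) * m) := by field_simp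
        _ ≤ S x := by
          simp only [hSdef]
          exact mul_le_mul_of_nonneg_left this (by positivity)
    have hSM : ∀ x, S x ≤ M := by
      intro x
      have hsum : (∑ j, w (x j)) ≤ (n : ℝ) * M := by
        calc (∑ j, w (x j)) ≤ ∑ _j : Fin n, M := Finset.sum_le_sum fun j _ => (hbound (x j)).2
          _ = (n : ℝ) * M := by
              rw [Finset.sum_const, Finset.card_univ, Fintype.card_fin, nsmul_eq_mul]
      have : w z + ∑ j, w (x j) ≤ (k : ℝ) * M := by
        have := (hbound z).2
        nlinarith [hkn]
      calc S x ≤ (1 / (k : ℝ)) * ((k : ℝ) * M) := by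
            simp only [hSdef]
            exact mul_le_mul_of_nonneg_left this (by positivity)
        _ = M := by field_simp
    have hS0 : ∀ x, 0 < S x := fun x => hm.trans_le (hSm x)
    -- the integrand
    have hfmeas : Measurable fun x : Fin n → Z => c / S x := measurable_const.div hSmeas
    have hfabs : ∀ x, |c / S x| ≤ c / m := by
      intro x
      rw [abs_of_nonneg (div_nonneg hc0 (hS0 x).le)]
      exact div_le_div_of_nonneg_left hc0 hm (hSm x)
    have hfint : Integrable (fun x : Fin n → Z => c / S x) Pp :=
      IWAEaux.integrable_of_bounded Pp hfmeas (c / m) hfabs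
    -- T and its absolute value
    set T : (Fin n → Z) → ℝ := fun x => ∑ j, g (x j) with hTdef
    have hTmeas : Measurable T := Finset.measurable_sum _ fun j _ => hgmeas.comp (measurable_pi_apply j)
    have hTabs : ∀ x, |T x| ≤ (n : ℝ) * M := by
      intro x
      calc |T x| ≤ ∑ j, |g (x j)| := Finset.abs_sum_le_sum_abs _ _
        _ ≤ ∑ _j : Fin n, M := Finset.sum_le_sum fun j _ => hgabs (x j)
        _ = (n : ℝ) * M := by
            rw [Finset.sum_const, Finset.card_univ, Fintype.card_fin, nsmul_eq_mul]
    have hTint : Integrable T Pp := IWAEaux.integrable_of_bounded Pp hTmeas _ hTabs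
    have hTabsint : Integrable (fun x => |T x|) Pp := hTint.abs
    have hT2 : ∫ x, T x * T x ∂Pp = (n : ℝ) * σ2 :=
      IWAEaux.integral_sum_sq ν g hgmeas M hgabs hg0
    -- pointwise: |S x - r| ≤ (1/k) * (M + |T x|)
    have hSr : ∀ x, |S x - r| ≤ (1 / (k : ℝ)) * (M + |T x|) := by
      intro x
      have hTx : T x = (∑ j, w (x j)) - (n : ℝ) * r := by
        simp only [hTdef]
        simp only [hgdef]
        rw [Finset.sum_sub_distrib, Finset.sum_const, Finset.card_univ, Fintype.card_fin,
          nsmul_eq_mul]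
      have e : (1 / (k:ℝ)) * ((k:ℝ) * r) = r := by
        rw [← mul_assoc, one_div_mul_cancel hk0.ne', one_mul]
      have hid : S x - r = (1 / (k : ℝ)) * ((w z - r) + T x) := by
        calc S x - r
            = (1/(k:ℝ)) * (w z + ∑ j, w (x j)) - (1/(k:ℝ)) * ((k:ℝ) * r) := by
              rw [e]
          _ = (1/(k:ℝ)) * ((w z - r) + T x) := by rw [hTx, ← hkn]; ring
      rw [hid, abs_mul, abs_of_nonneg (by positivity : (0:ℝ) ≤ 1 / (k:ℝ))]
      refine mul_le_mul_of_nonneg_left ?_ (by positivity)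
      calc |w z - r + T x| ≤ |w z - r| + |T x| := abs_add_le _ _
        _ ≤ M + |T x| := by
            have := hgabs z
            simp only [hgdef] at this
            linarith
    -- pointwise: |c/S - c/r| ≤ D * |S - r|
    have hpoint : ∀ x, |c / S x - c / r| ≤ D * |S x - r| := by
      intro x
      have hid : c / S x - c / r = c * (r - S x) / (S x * r) := by
        rw [div_sub_div _ _ (hS0 x).ne' hr0.ne']
        ring
      rw [hid, abs_div, abs_mul, abs_of_nonneg hc0,
        abs_of_pos (mul_pos (hS0 x) hr0), abs_sub_comm]
      calc c * |S x - r| / (S x * r) ≤ c * |S x - r| / (m * r) := by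
            apply div_le_div_of_nonneg_left (mul_nonneg hc0 (abs_nonneg _))
              (mul_pos hm hr0)
            exact mul_le_mul_of_nonneg_right (hSm x) hr0.le
        _ = D * |S x - r| := by rw [hDdef]; ring
    -- now the chain of integral bounds
    have step1 : ‖(∫ x, c / S x ∂Pp) - c / r‖ ≤ ∫ x, |c / S x - c / r| ∂Pp := by
      have : (∫ x, c / S x ∂Pp) - c / r = ∫ x, (c / S x - c / r) ∂Pp := by
        rw [integral_sub hfint (integrable_const _), integral_const]
        simp
      rw [this]
      simpa [Real.norm_eq_abs] using norm_integral_le_integral_norm fun x => c / S x - c / r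
    have hSrint : Integrable (fun x => |S x - r|) Pp :=
      ((IWAEaux.integrable_of_bounded Pp hSmeas M fun x =>
        abs_le.mpr ⟨by linarith [hSm x], hSM x⟩).sub (integrable_const r)).abs
    have step2 : ∫ x, |c / S x - c / r| ∂Pp ≤ D * ∫ x, |S x - r| ∂Pp := by
      rw [← integral_const_mul]
      exact integral_mono ((hfint.sub (integrable_const _)).abs)
        (hSrint.const_mul D) hpoint
    have step3 : ∫ x, |S x - r| ∂Pp ≤ (1 / (k : ℝ)) * (M + ∫ x, |T x| ∂Pp) := by
      have hmono := integral_mono hSrint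
        (((integrable_const M).add hTabsint).const_mul (1 / (k : ℝ))) hSr
      have heq : ∫ x, (1 / (k:ℝ)) * (M + |T x|) ∂Pp
          = (1 / (k:ℝ)) * (M + ∫ x, |T x| ∂Pp) := by
        rw [integral_const_mul, integral_add (integrable_const M) hTabsint, integral_const,
          probReal_univ, one_smul]
      exact hmono.trans_eq heq
    -- |T| ≤ (k + T*T)/(2√k)
    have hsq : Real.sqrt k * Real.sqrt k = (k : ℝ) := Real.mul_self_sqrt hk0.le
    have hsqpos : 0 < Real.sqrt k := Real.sqrt_pos.mpr hk0
    have hTptwise : ∀ x, |T x| ≤ ((k : ℝ) + T x * T x) / (2 * Real.sqrt k) := by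
      intro x
      rw [le_div_iff₀ (by positivity)]
      nlinarith [sq_nonneg (|T x| - Real.sqrt k), sq_abs (T x), abs_nonneg (T x)]
    have step4 : ∫ x, |T x| ∂Pp ≤ ((k : ℝ) + (n : ℝ) * σ2) / (2 * Real.sqrt k) := by
      have hint2 : Integrable (fun x => T x * T x) Pp :=
        IWAEaux.integrable_of_bounded Pp (hTmeas.mul hTmeas) (((n:ℝ)*M) * ((n:ℝ)*M))
          fun x => by
            rw [abs_mul]
            exact mul_le_mul (hTabs x) (hTabs x) (abs_nonneg _)
              ((abs_nonneg (T x)).trans (hTabs x))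
      have hmono := integral_mono hTabsint
        (((integrable_const ((k:ℝ))).add hint2).div_const (2 * Real.sqrt k)) hTptwise
      have heq : ∫ x, ((k:ℝ) + T x * T x) / (2 * Real.sqrt k) ∂Pp
          = ((k:ℝ) + (n:ℝ) * σ2) / (2 * Real.sqrt k) := by
        rw [integral_div, integral_add (integrable_const _) hint2, integral_const,
          probReal_univ, one_smul, hT2]
      exact hmono.trans_eq heq
    -- arithmetic combination
    have harith : ((k : ℝ) + (n : ℝ) * σ2) / (2 * Real.sqrt k)
        ≤ Real.sqrt k * (1 + M * M) / 2 := by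
      rw [div_le_iff₀ (by positivity)]
      have h1 : (n : ℝ) * σ2 ≤ (k : ℝ) * (M * M) :=
        mul_le_mul hnk hσ2M hσ20 hk0.le
      nlinarith [hsq, hsqpos]
    have hTfinal : ∫ x, |T x| ∂Pp ≤ Real.sqrt k * (1 + M * M) / 2 := step4.trans harith
    calc ‖(∫ zs : Fin (k-1) → Z, c / ((1 / (k : ℝ)) * (w z + ∑ j, w (zs j)))
            ∂(Measure.pi fun _ => ν)) - c / r‖
        = ‖(∫ x, c / S x ∂Pp) - c / r‖ := rfl
      _ ≤ ∫ x, |c / S x - c / r| ∂Pp := step1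
      _ ≤ D * ∫ x, |S x - r| ∂Pp := step2
      _ ≤ D * ((1 / (k : ℝ)) * (M + ∫ x, |T x| ∂Pp)) := by
          apply mul_le_mul_of_nonneg_left step3 hD0
      _ ≤ D * ((1 / (k : ℝ)) * (M + Real.sqrt k * (1 + M * M) / 2)) := by
          apply mul_le_mul_of_nonneg_left _ hD0
          apply mul_le_mul_of_nonneg_left _ (by positivity)
          linarith [hTfinal]
      _ = D * ((M + Real.sqrt k * (1 + M * M) / 2) / k) := by ring
  -- the bound tends to zero
  have h1 : Tendsto (fun k : ℕ => ((k : ℝ))⁻¹) atTop (nhds 0) :=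
    tendsto_inv_atTop_nhds_zero_nat
  have h2 : Tendsto (fun k : ℕ => (Real.sqrt k)⁻¹) atTop (nhds 0) := by
    have := (Real.continuous_sqrt.tendsto 0).comp h1
    simpa [Function.comp_def, Real.sqrt_inv] using this
  have hB : Tendsto (fun k : ℕ => D * ((M + Real.sqrt k * (1 + M * M) / 2) / k))
      atTop (nhds 0) := by
    have hb : Tendsto (fun k : ℕ =>
        D * (M * ((k : ℝ))⁻¹ + ((1 + M * M) / 2) * (Real.sqrt k)⁻¹)) atTop (nhds 0) := by
      have := ((h1.const_mul M).add (h2.const_mul ((1 + M * M) / 2))).const_mul D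
      simpa using this
    refine hb.congr' ?_
    filter_upwards [eventually_ge_atTop 1] with k hk
    have hk0 : (0 : ℝ) < (k : ℝ) := by exact_mod_cast hk
    have hsq : Real.sqrt k * Real.sqrt k = (k : ℝ) := Real.mul_self_sqrt hk0.le
    have hsqpos : 0 < Real.sqrt k := Real.sqrt_pos.mpr hk0
    congr 1
    rw [eq_div_iff hk0.ne']
    field_simp [hsqpos.ne']
    linear_combination (-(1+M*M)) * hsq
  rw [tendsto_iff_norm_sub_tendsto_zero]
  refine squeeze_zero_norm' ?_ hB
  filter_upwards [eventually_ge_atTop 1] with k hk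
  simpa [Real.norm_eq_abs] using key k hk
end
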